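/- arXiv:1309.2326 — 5 statements merged into one kernel-verified Lean document; each statement's English description precedes it below -/
import Mathlib

section
/- For every integer n ≥ 2 and every integer k with 1 ≤ k < n, the real 2×2 matrix y = [[0, −1], [1, 2cos(π/n)]] satisfies y^k ≠ I and y^k ≠ −I; consequently the image of y in PSL(2,ℝ) has order exactly n. -/
open scoped MatrixGroups

private lemma hecke_pow_formula (c : ℝ) (a : ℕ → ℝ) (h0 : a 0 = 0) (h1 : a 1 = 1)
    (hrec : ∀ k, a (k + 2) = 2 * c * a (k + 1) - a k) :
    ∀ k, (!![0, -1; 1, 2 * c] : Matrix (Fin 2) (Fin 2) ℝ) ^ (k + 1) =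
      !![-a k, -a (k + 1); a (k + 1), a (k + 2)] := by
  intro k
  induction k with
  | zero =>
    simp only [pow_one, h0, h1, hrec 0, h0]
    norm_num
  | succ k ih =>
    rw [pow_succ, ih]
    have e3 : a (k + 1 + 2) = 2 * c * a (k + 2) - a (k + 1) := hrec (k + 1)
    ext i j
    fin_cases i <;> fin_cases j <;>
      simp [Matrix.mul_apply, Fin.sum_univ_succ, e3, hrec k] <;> ring

/-- For every integer `n ≥ 2` and every integer `k` with `1 ≤ k < n`, the real 2×2 matrix
`y = [[0, −1], [1, 2cos(π/n)]]` satisfies `y ^ k ≠ I` and `y ^ k ≠ −I`; consequently the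
image of `y` in `PSL(2,ℝ)` has order exactly `n`. -/
theorem hecke_y_order_n (n : ℕ) (hn : 2 ≤ n) :
    (∀ k : ℕ, 1 ≤ k → k < n →
      (!![0, -1; 1, 2 * Real.cos (Real.pi / n)] : Matrix (Fin 2) (Fin 2) ℝ) ^ k ≠ 1 ∧
      (!![0, -1; 1, 2 * Real.cos (Real.pi / n)] : Matrix (Fin 2) (Fin 2) ℝ) ^ k ≠ -1) ∧
    orderOf ((QuotientGroup.mk
        (⟨!![0, -1; 1, 2 * Real.cos (Real.pi / n)], by
          simp [Matrix.det_fin_two_of]⟩ : Matrix.SpecialLinearGroup (Fin 2) ℝ)) :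
        PSL(2, ℝ)) = n := by
  have hn0 : (0 : ℝ) < n := by positivity
  set θ : ℝ := Real.pi / n with hθ
  have hθpos : 0 < θ := by positivity
  have hθlt : θ < Real.pi := by
    rw [hθ, div_lt_iff₀ hn0]
    nlinarith [Real.pi_pos, show (2 : ℝ) ≤ n by exact_mod_cast hn]
  have hs : 0 < Real.sin θ := Real.sin_pos_of_pos_of_lt_pi hθpos hθlt
  set a : ℕ → ℝ := fun k => Real.sin (k * θ) / Real.sin θ with ha
  have h0 : a 0 = 0 := by simp [ha]
  have h1 : a 1 = 1 := by simp [ha, div_self hs.ne']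
  have hrec : ∀ k, a (k + 2) = 2 * Real.cos θ * a (k + 1) - a k := by
    intro k
    have key : Real.sin ((k + 2) * θ) =
        2 * Real.cos θ * Real.sin ((k + 1) * θ) - Real.sin (k * θ) := by
      have e1 : ((k : ℝ) + 2) * θ = ((k : ℝ) + 1) * θ + θ := by ring
      have e2 : (k : ℝ) * θ = ((k : ℝ) + 1) * θ - θ := by ring
      rw [e1, e2, Real.sin_add, Real.sin_sub]
      ring
    simp only [ha]
    push_cast
    rw [key]
    ring
  have hpow := hecke_pow_formula (Real.cos θ) a h0 h1 hrec
  -- a k ≠ 0 for 1 ≤ k < n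
  have hane : ∀ k : ℕ, 1 ≤ k → k < n → a k ≠ 0 := by
    intro k hk1 hkn
    have hkθpos : 0 < (k : ℝ) * θ := by
      have : (1 : ℝ) ≤ k := by exact_mod_cast hk1
      nlinarith
    have hkθlt : (k : ℝ) * θ < Real.pi := by
      have hk' : (k : ℝ) < n := by exact_mod_cast hkn
      calc (k : ℝ) * θ < n * θ := by exact mul_lt_mul_of_pos_right hk' hθpos
        _ = Real.pi := by rw [hθ]; field_simp
    have := Real.sin_pos_of_pos_of_lt_pi hkθpos hkθlt
    exact div_ne_zero this.ne' hs.ne'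
  have key1 : ∀ k : ℕ, 1 ≤ k → k < n →
      (!![0, -1; 1, 2 * Real.cos (Real.pi / n)] : Matrix (Fin 2) (Fin 2) ℝ) ^ k ≠ 1 ∧
      (!![0, -1; 1, 2 * Real.cos (Real.pi / n)] : Matrix (Fin 2) (Fin 2) ℝ) ^ k ≠ -1 := by
    intro k hk1 hkn
    obtain ⟨m, rfl⟩ : ∃ m, k = m + 1 := ⟨k - 1, (Nat.succ_pred_eq_of_pos hk1).symm⟩
    rw [← hθ, hpow m]
    constructor <;> intro h
    · have := congrFun (congrFun h 1) 0
      simp [Matrix.one_apply] at this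
      exact hane (m + 1) (Nat.le_add_left 1 m) hkn (by exact_mod_cast this)
    · have := congrFun (congrFun h 1) 0
      simp [Matrix.one_apply] at this
      exact hane (m + 1) (Nat.le_add_left 1 m) hkn (by exact_mod_cast this)
  refine ⟨key1, ?_⟩
  -- y^n = -1
  have han : a n = 0 := by
    have : (n : ℝ) * θ = Real.pi := by
      rw [hθ]; field_simp
    simp [ha, this]
  have hanm : a (n - 1) = 1 := by
    have : ((n - 1 : ℕ) : ℝ) * θ = Real.pi - θ := by
      rw [hθ, Nat.cast_sub (by omega : 1 ≤ n)]
      field_simp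
      ring
    simp [ha, this, Real.sin_pi_sub, div_self hs.ne']
  have hanp : a (n + 1) = -1 := by
    have : ((n + 1 : ℕ) : ℝ) * θ = θ + Real.pi := by
      rw [hθ]; push_cast; field_simp; ring
    rw [ha]
    simp only [this, Real.sin_add_pi]
    rw [neg_div, div_self hs.ne']
  have hyn : (!![0, -1; 1, 2 * Real.cos (Real.pi / n)] : Matrix (Fin 2) (Fin 2) ℝ) ^ n = -1 := by
    have hn1 : n - 1 + 1 = n := by omega
    have hn2 : n - 1 + 2 = n + 1 := by omega
    have := hpow (n - 1)
    rw [hn1, hn2, hanm, han, hanp] at this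
    rw [← hθ, this]
    norm_num
    ext i j
    fin_cases i <;> fin_cases j <;> simp [Matrix.one_apply]
  -- now order in PSL
  set Y : Matrix.SpecialLinearGroup (Fin 2) ℝ :=
    (⟨!![0, -1; 1, 2 * Real.cos (Real.pi / n)], by
      simp [Matrix.det_fin_two_of]⟩ : Matrix.SpecialLinearGroup (Fin 2) ℝ) with hY
  have hcard : Fintype.card (Fin 2) = 2 := by simp
  rw [orderOf_eq_iff (by omega : 0 < n)]
  constructor
  · rw [← QuotientGroup.mk_pow, QuotientGroup.eq_one_iff]
    rw [Matrix.SpecialLinearGroup.mem_center_iff]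
    refine ⟨-1, by norm_num [hcard], ?_⟩
    rw [Matrix.SpecialLinearGroup.coe_pow, hY, hyn]
    ext i j
    fin_cases i <;> fin_cases j <;> simp [Matrix.one_apply]
  · intro m hmn hm0
    rw [← QuotientGroup.mk_pow, Ne, QuotientGroup.eq_one_iff,
      Matrix.SpecialLinearGroup.mem_center_iff]
    rintro ⟨r, hr2, hr⟩
    rw [hcard] at hr2
    have hr' : r = 1 ∨ r = -1 := by
      rcases mul_eq_zero.mp (show (r - 1) * (r + 1) = 0 by nlinarith) with h | h
      · left; linarith
      · right; linarith
    rw [Matrix.SpecialLinearGroup.coe_pow, hY] at hr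
    obtain ⟨hne1, hnem1⟩ := key1 m hm0 hmn
    rcases hr' with rfl | rfl
    · apply hne1
      rw [← hr]
      ext i j
      fin_cases i <;> fin_cases j <;> simp [Matrix.one_apply]
    · apply hnem1
      rw [← hr]
      ext i j
      fin_cases i <;> fin_cases j <;> simp [Matrix.one_apply]
end

section
/- In the symmetric group on {1,…,48}, let σ₀ = (1,10)(11,14)(15,8)(4,5)(2,21)(3,17)(20,6)(7,31)(30,16)(27,13)(22,9)(12,26)(25,39)(28,42)(43,29)(32,46)(47,19)(18,33)(24,34)(23,38)(35,37)(40,41)(44,45)(36,48) and let σ₁ be the product of the twelve 4-cycles (4i+1, 4i+2, 4i+3, 4i+4) for i = 0,…,11. Then σ₀ is a fixed-point-free involution, σ₁⁴ = 1, and the subgroup generated by σ₀ and σ₁ acts transitively on {1,…,48}. -/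
/-!
The graph on the 48 darts with an edge between `x` and `σ x` for `σ ∈ {σ₀, σ₁}` is connected:
a breadth-first search from the dart `1` reaches every dart within nine steps, and every dart
it reaches lies in the orbit of `1`. Since orbits are the classes of an equivalence relation,
this gives transitivity. The remaining claims are finite computations on `{1, …, 48}`, together
with the observation that `σ₀` and `σ₁` fix every point outside it.
-/

set_option maxRecDepth 20000

open Equiv

theorem Equiv.Perm.pow_eq_one_of_forall_mem {α : Type*} {f : Perm α} {s : Set α} {n : ℕ}
    (hf : ∀ x ∉ s, f x = x) (hn : ∀ x ∈ s, (f ^ n) x = x) : f ^ n = 1 := by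
  ext x
  by_cases hx : x ∈ s
  · exact hn x hx
  · exact Perm.pow_apply_eq_self_of_apply_eq_self (hf x hx) n

namespace MulAction

variable {G α : Type*} [Group G] [MulAction G α]

theorem exists_smul_eq_of_subset_orbit {H : Subgroup G} {s : Set α} {a₀ : α}
    (hs : s ⊆ orbit H a₀) {a b : α} (ha : a ∈ s) (hb : b ∈ s) : ∃ g ∈ H, g • a = b := by
  obtain ⟨⟨h₁, hh₁⟩, rfl⟩ := hs ha
  obtain ⟨⟨h₂, hh₂⟩, rfl⟩ := hs hb
  refine ⟨h₂ * h₁⁻¹, mul_mem hh₂ (inv_mem hh₁), ?_⟩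
  simp [Subgroup.smul_def, mul_smul]

variable [DecidableEq α]

def orbitStep (f g : G) (t : Finset α) : Finset α :=
  t ∪ t.image (f • ·) ∪ t.image (g • ·)

theorem orbitStep_subset_orbit {f g : G} {a : α} {t : Finset α}
    (ht : ↑t ⊆ orbit (Subgroup.closure {f, g}) a) :
    ↑(orbitStep f g t) ⊆ orbit (Subgroup.closure {f, g}) a := by
  have generator_smul_mem : ∀ k ∈ ({f, g} : Set G), ∀ x ∈ t,
      k • x ∈ orbit (Subgroup.closure {f, g}) a := fun k hk x hx =>
    mapsTo_smul_orbit (⟨k, Subgroup.subset_closure hk⟩ : Subgroup.closure {f, g}) a (ht hx)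
  intro y hy
  simp only [orbitStep, Finset.coe_union, Finset.coe_image, Set.mem_union, Set.mem_image,
    Finset.mem_coe] at hy
  rcases hy with (hy | ⟨x, hx, rfl⟩) | ⟨x, hx, rfl⟩
  · exact ht hy
  · exact generator_smul_mem f (Set.mem_insert _ _) x hx
  · exact generator_smul_mem g (Set.mem_insert_of_mem _ rfl) x hx

theorem iterate_orbitStep_subset_orbit (f g : G) (a : α) (n : ℕ) :
    ↑((orbitStep f g)^[n] {a}) ⊆ orbit (Subgroup.closure {f, g}) a := by
  induction n with
  | zero => simp
  | succ n ih => simpa only [Function.iterate_succ_apply'] using orbitStep_subset_orbit ih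

end MulAction

/-- Permutation representation for the cuboctahedron (H4, 48 darts): σ₀ is a fixed-point-free involution
on {1,…,48}, σ₁^4 = 1, and the subgroup generated by σ₀ and σ₁ acts transitively on
{1,…,48}. -/
theorem cuboctahedron_permutation_representation (σ₀ σ₁ : Equiv.Perm ℕ)
    (hσ₀ : σ₀ = Equiv.swap 1 10 *
      Equiv.swap 11 14 *
      Equiv.swap 15 8 *
      Equiv.swap 4 5 *
      Equiv.swap 2 21 *
      Equiv.swap 3 17 *
      Equiv.swap 20 6 *
      Equiv.swap 7 31 *
      Equiv.swap 30 16 *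
      Equiv.swap 27 13 *
      Equiv.swap 22 9 *
      Equiv.swap 12 26 *
      Equiv.swap 25 39 *
      Equiv.swap 28 42 *
      Equiv.swap 43 29 *
      Equiv.swap 32 46 *
      Equiv.swap 47 19 *
      Equiv.swap 18 33 *
      Equiv.swap 24 34 *
      Equiv.swap 23 38 *
      Equiv.swap 35 37 *
      Equiv.swap 40 41 *
      Equiv.swap 44 45 *
      Equiv.swap 36 48)
    (hσ₁ : σ₁ = ([1, 2, 3, 4] : List ℕ).formPerm *
      ([5, 6, 7, 8] : List ℕ).formPerm *
      ([9, 10, 11, 12] : List ℕ).formPerm *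
      ([13, 14, 15, 16] : List ℕ).formPerm *
      ([17, 18, 19, 20] : List ℕ).formPerm *
      ([21, 22, 23, 24] : List ℕ).formPerm *
      ([25, 26, 27, 28] : List ℕ).formPerm *
      ([29, 30, 31, 32] : List ℕ).formPerm *
      ([33, 34, 35, 36] : List ℕ).formPerm *
      ([37, 38, 39, 40] : List ℕ).formPerm *
      ([41, 42, 43, 44] : List ℕ).formPerm *
      ([45, 46, 47, 48] : List ℕ).formPerm) :
    σ₀ * σ₀ = 1 ∧ (∀ x ∈ Finset.Icc 1 48, σ₀ x ≠ x) ∧ σ₁ ^ 4 = 1 ∧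
    ∀ a ∈ Finset.Icc 1 48, ∀ b ∈ Finset.Icc 1 48,
      ∃ g ∈ Subgroup.closure ({σ₀, σ₁} : Set (Equiv.Perm ℕ)), g a = b := by
  have hσ₀_fix : ∀ x ∉ Finset.Icc 1 48, σ₀ x = x := by
    intro x hx
    simp only [Finset.mem_Icc, not_and_or, not_le] at hx
    subst hσ₀
    simp (disch := omega) only [Perm.mul_apply, swap_apply_of_ne_of_ne]
  have hσ₁_fix : ∀ x ∉ Finset.Icc 1 48, σ₁ x = x := by
    intro x hx
    simp only [Finset.mem_Icc, not_and_or, not_le] at hx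
    subst hσ₁
    simp (disch := simp; omega) only [Perm.mul_apply, List.formPerm_apply_of_notMem]
  refine ⟨?_, by subst hσ₀; decide, ?_, ?_⟩
  · rw [← sq]
    exact Perm.pow_eq_one_of_forall_mem hσ₀_fix (by subst hσ₀; decide)
  · exact Perm.pow_eq_one_of_forall_mem hσ₁_fix (by subst hσ₁; decide)
  · have hbfs : Finset.Icc 1 48 ⊆ (MulAction.orbitStep σ₀ σ₁)^[9] {1} := by
      subst hσ₀ hσ₁; decide
    intro a ha b hb
    simpa only [Perm.smul_def] using MulAction.exists_smul_eq_of_subset_orbit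
      ((Finset.coe_subset.2 hbfs).trans (MulAction.iterate_orbitStep_subset_orbit σ₀ σ₁ 1 9))
      (Finset.mem_coe.2 ha) (Finset.mem_coe.2 hb)
end

section
/- In the symmetric group on {1,…,60}, let σ₀ = (1,6)(10,11)(5,15)(2,21)(3,16)(4,43)(7,22)(8,27)(9,33)(12,34)(13,37)(14,42)(17,25)(23,26)(28,32)(35,36)(38,41)(20,44)(18,46)(24,47)(30,48)(29,52)(31,53)(40,54)(39,57)(45,58)(19,59)(50,60)(55,56)(49,51) and let σ₁ be the product of the twelve 5-cycles (5i+1, 5i+2, 5i+3, 5i+4, 5i+5) for i = 0,…,11. Then σ₀ is a fixed-point-free involution, σ₁⁵ = 1, and the subgroup generated by σ₀ and σ₁ acts transitively on {1,…,60}. -/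
/-!
Both permutations move only points of `{1, …, 60}`, so they lie in the fixing subgroup of the
complement, where two elements are equal as soon as they agree on `{1, …, 60}`: the relations
`σ₀² = 1` and `σ₁⁵ = 1` thus reduce to finitely many evaluations. For transitivity, a
breadth-first search from `1` along `σ₀` and `σ₁` reaches every dart within ten steps, and every
point it reaches lies in the orbit of `1` under `⟨σ₀, σ₁⟩`.
-/
open MulAction Equiv

namespace Equiv.Perm

variable {α : Type*}

theorem swap_mem_fixingSubgroup_compl [DecidableEq α] {s : Set α} {a b : α}
    (ha : a ∈ s) (hb : b ∈ s) : swap a b ∈ fixingSubgroup (Perm α) sᶜ :=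
  (mem_fixingSubgroup_iff _).2 fun _ hx =>
    swap_apply_of_ne_of_ne (fun h => hx (h ▸ ha)) (fun h => hx (h ▸ hb))

theorem formPerm_mem_fixingSubgroup_compl [DecidableEq α] {s : Set α} {l : List α}
    (hl : ∀ x ∈ l, x ∈ s) : l.formPerm ∈ fixingSubgroup (Perm α) sᶜ :=
  (mem_fixingSubgroup_iff _).2 fun _ hx => List.formPerm_apply_of_notMem fun h => hx (hl _ h)

theorem eq_of_forall_mem_eq_of_mem_fixingSubgroup_compl {s : Finset α} {σ τ : Perm α}
    (hσ : σ ∈ fixingSubgroup (Perm α) (s : Set α)ᶜ) (hτ : τ ∈ fixingSubgroup (Perm α) (s : Set α)ᶜ)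
    (h : ∀ x ∈ s, σ x = τ x) : σ = τ := by
  ext x
  by_cases hx : x ∈ s
  · exact h x hx
  · exact ((mem_fixingSubgroup_iff _).1 hσ x hx).trans ((mem_fixingSubgroup_iff _).1 hτ x hx).symm

end Equiv.Perm

namespace MulAction

variable {G α : Type*} [Group G] [MulAction G α] [DecidableEq α]

def reachable (gens : List G) (a : α) : ℕ → Finset α
  | 0 => {a}
  | n + 1 => reachable gens a n ∪ (reachable gens a n).biUnion fun x => (gens.map (· • x)).toFinset

theorem mem_orbit_closure_of_mem_reachable {S : Set G} {gens : List G} (hgens : ∀ g ∈ gens, g ∈ S)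
    {a x : α} {n : ℕ} (hx : x ∈ reachable gens a n) : x ∈ orbit (Subgroup.closure S) a := by
  induction n generalizing x with
  | zero => exact (Finset.mem_singleton.1 hx).symm ▸ mem_orbit_self a
  | succ n ih =>
    rcases Finset.mem_union.1 hx with hx | hx
    · exact ih hx
    obtain ⟨y, hy, hxy⟩ := Finset.mem_biUnion.1 hx
    obtain ⟨g, hg, rfl⟩ := List.mem_map.1 (List.mem_toFinset.1 hxy)
    obtain ⟨h, rfl⟩ := ih hy
    exact ⟨⟨g, Subgroup.subset_closure (hgens g hg)⟩ * h, mul_smul _ _ _⟩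

theorem exists_mem_closure_smul_eq_of_subset_reachable {S : Set G} {gens : List G}
    (hgens : ∀ g ∈ gens, g ∈ S) {s : Finset α} {a : α} {n : ℕ} (hs : s ⊆ reachable gens a n) :
    ∀ b ∈ s, ∀ c ∈ s, ∃ g ∈ Subgroup.closure S, g • b = c := by
  intro b hb c hc
  have hb' := mem_orbit_closure_of_mem_reachable hgens (hs hb)
  have hc' := mem_orbit_closure_of_mem_reachable hgens (hs hc)
  obtain ⟨g, hg⟩ := orbit_eq_iff.2 hb' ▸ hc'
  exact ⟨g, g.2, hg⟩

end MulAction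

/-- Permutation representation for the icosahedron (H5, 60 darts): σ₀ is a fixed-point-free involution
on {1,…,60}, σ₁^5 = 1, and the subgroup generated by σ₀ and σ₁ acts transitively on
{1,…,60}. -/
theorem icosahedron_permutation_representation (σ₀ σ₁ : Equiv.Perm ℕ)
    (hσ₀ : σ₀ = Equiv.swap 1 6 *
      Equiv.swap 10 11 *
      Equiv.swap 5 15 *
      Equiv.swap 2 21 *
      Equiv.swap 3 16 *
      Equiv.swap 4 43 *
      Equiv.swap 7 22 *
      Equiv.swap 8 27 *
      Equiv.swap 9 33 *
      Equiv.swap 12 34 *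
      Equiv.swap 13 37 *
      Equiv.swap 14 42 *
      Equiv.swap 17 25 *
      Equiv.swap 23 26 *
      Equiv.swap 28 32 *
      Equiv.swap 35 36 *
      Equiv.swap 38 41 *
      Equiv.swap 20 44 *
      Equiv.swap 18 46 *
      Equiv.swap 24 47 *
      Equiv.swap 30 48 *
      Equiv.swap 29 52 *
      Equiv.swap 31 53 *
      Equiv.swap 40 54 *
      Equiv.swap 39 57 *
      Equiv.swap 45 58 *
      Equiv.swap 19 59 *
      Equiv.swap 50 60 *
      Equiv.swap 55 56 *
      Equiv.swap 49 51)
    (hσ₁ : σ₁ = ([1, 2, 3, 4, 5] : List ℕ).formPerm *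
      ([6, 7, 8, 9, 10] : List ℕ).formPerm *
      ([11, 12, 13, 14, 15] : List ℕ).formPerm *
      ([16, 17, 18, 19, 20] : List ℕ).formPerm *
      ([21, 22, 23, 24, 25] : List ℕ).formPerm *
      ([26, 27, 28, 29, 30] : List ℕ).formPerm *
      ([31, 32, 33, 34, 35] : List ℕ).formPerm *
      ([36, 37, 38, 39, 40] : List ℕ).formPerm *
      ([41, 42, 43, 44, 45] : List ℕ).formPerm *
      ([46, 47, 48, 49, 50] : List ℕ).formPerm *
      ([51, 52, 53, 54, 55] : List ℕ).formPerm *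
      ([56, 57, 58, 59, 60] : List ℕ).formPerm) :
    σ₀ * σ₀ = 1 ∧ (∀ x ∈ Finset.Icc 1 60, σ₀ x ≠ x) ∧ σ₁ ^ 5 = 1 ∧
    ∀ a ∈ Finset.Icc 1 60, ∀ b ∈ Finset.Icc 1 60,
      ∃ g ∈ Subgroup.closure ({σ₀, σ₁} : Set (Equiv.Perm ℕ)), g a = b := by
  have h₀ : σ₀ ∈ fixingSubgroup (Perm ℕ) (Finset.Icc 1 60 : Set ℕ)ᶜ := by
    rw [hσ₀]
    with_reducible repeat' apply Subgroup.mul_mem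
    all_goals refine Perm.swap_mem_fixingSubgroup_compl ?_ ?_ <;> simp
  have h₁ : σ₁ ∈ fixingSubgroup (Perm ℕ) (Finset.Icc 1 60 : Set ℕ)ᶜ := by
    rw [hσ₁]
    with_reducible repeat' apply Subgroup.mul_mem
    all_goals exact Perm.formPerm_mem_fixingSubgroup_compl (by simp)
  refine ⟨Perm.eq_of_forall_mem_eq_of_mem_fixingSubgroup_compl (Subgroup.mul_mem _ h₀ h₀)
      (Subgroup.one_mem _) (by subst hσ₀; decide +kernel), by subst hσ₀; decide +kernel,
    Perm.eq_of_forall_mem_eq_of_mem_fixingSubgroup_compl (Subgroup.pow_mem _ h₁ 5)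
      (Subgroup.one_mem _) (by subst hσ₁; decide +kernel), ?_⟩
  exact exists_mem_closure_smul_eq_of_subset_reachable (gens := [σ₀, σ₁]) (by simp) (a := 1)
    (n := 10) (by subst hσ₀ hσ₁; decide +kernel)
end

section
/- For every integer n ≥ 3, define permutations of {1,…,6n} by σ₀ = (3n−2, 3)(3n−1, 6n−2)(6n−1, 3n+3) · ∏_{i=0}^{n−2} (3i+1, 3i+6)(3i+2, 3n+3i+1)(3n+3i+2, 3n+3i+6), and σ₁ = the product of the 2n 3-cycles (3i+1, 3i+2, 3i+3) for i = 0,…,2n−1. Then σ₀ is a fixed-point-free involution on {1,…,6n}, σ₁³ = 1, and the subgroup generated by σ₀ and σ₁ acts transitively on {1,…,6n}. -/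
/-!
Number the darts so that `3i+1, 3i+2, 3i+3` surround vertex `i`, where `0, …, n-1` is the
top `n`-gon and `n+i` is the vertex below `i`. Then `σ₁` is the product of the disjoint vertex
3-cycles, and `σ₀` is the product over `i < n` of the three transpositions pairing the darts of
the top edge `i — i+1`, the vertical edge `i — n+i` and the bottom edge `n+i — n+i+1`
(indices mod `n`). These blocks partition `{1, …, 6n}`, so on each block `σ₀` agrees with a
fixed-point-free involution and `σ₁` with a 3-cycle. For transitivity, `σ₁` connects the darts
at a vertex, while the top and vertical edges connect vertex `i` to `i+1` and to `n+i`.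
-/

open Equiv Equiv.Perm MulAction

namespace Equiv.Perm

variable {α : Type*}

theorem list_prod_apply_eq_self {l : List (Perm α)} {x : α} (h : ∀ p ∈ l, p x = x) :
    l.prod x = x :=
  (stabilizer (Perm α) x).list_prod_mem h

theorem prod_map_range_apply_eq_self (f : ℕ → Perm α) {m : ℕ} {x : α}
    (h : ∀ k < m, f k x = x) : ((List.range m).map f).prod x = x :=
  list_prod_apply_eq_self (by simpa using h)

theorem prod_map_range_apply (f : ℕ → Perm α) {m j : ℕ} (hj : j < m) {x : α}
    (hx : ∀ k < m, k ≠ j → f k x = x) (hfx : ∀ k < m, k ≠ j → f k (f j x) = f j x) :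
    ((List.range m).map f).prod x = f j x := by
  induction m with
  | zero => omega
  | succ m ih =>
    rw [List.range_succ, List.map_append, List.prod_append, List.map_singleton,
      List.prod_singleton, mul_apply]
    rcases Nat.lt_succ_iff_lt_or_eq.1 hj with hj | rfl
    · rw [hx m (by omega) (by omega),
        ih hj (fun k hk => hx k (by omega)) (fun k hk => hfx k (by omega))]
    · exact prod_map_range_apply_eq_self f fun k hk => hfx k (by omega) (by omega)

theorem pow_apply_eq_pow_apply_of_eqOn {σ τ : Perm α} {s : Set α} (hτ : Set.MapsTo τ s s)
    (hστ : Set.EqOn σ τ s) (k : ℕ) {x : α} (hx : x ∈ s) : (σ ^ k) x = (τ ^ k) x := by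
  induction k generalizing x with
  | zero => rfl
  | succ k ih => rw [pow_succ, pow_succ, mul_apply, mul_apply, hστ hx, ih (hτ hx)]

theorem orbit_apply_eq {G : Subgroup (Perm α)} {g : Perm α} (hg : g ∈ G) (x : α) :
    orbit G (g x) = orbit G x :=
  orbit_smul (⟨g, hg⟩ : G) x

theorem exists_mem_apply_eq_of_orbit_eq {G : Subgroup (Perm α)} {a b : α}
    (h : orbit G a = orbit G b) : ∃ g ∈ G, g a = b := by
  obtain ⟨g, hg⟩ := orbit_eq_iff.1 h.symm
  exact ⟨g, g.2, hg⟩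

theorem swap_mul_swap_mul_swap_sq [DecidableEq α] {a b c d e f : α}
    (h : [a, b, c, d, e, f].Nodup) : (swap a b * swap c d * swap e f) ^ 2 = 1 := by
  simp only [List.nodup_cons, List.mem_cons, List.not_mem_nil, or_false, not_or] at h
  have hab_cd : Commute (swap a b) (swap c d) :=
    (disjoint_swap_swap (by simp; tauto)).commute
  have hcd_ef : Commute (swap a b * swap c d) (swap e f) :=
    (disjoint_swap_swap (by simp; tauto)).commute.mul_left
      (disjoint_swap_swap (by simp; tauto)).commute
  rw [hcd_ef.mul_pow, hab_cd.mul_pow, sq, sq, sq, swap_mul_self, swap_mul_self, swap_mul_self,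
    one_mul, one_mul]

end Equiv.Perm

namespace NPrism

def edgeSwaps (n i j : ℕ) : Perm ℕ :=
  swap (3 * i + 1) (3 * j + 3) * swap (3 * i + 2) (3 * n + 3 * i + 1) *
    swap (3 * n + 3 * i + 2) (3 * n + 3 * j + 3)

def edgeDarts (n i j : ℕ) : Set ℕ :=
  {3 * i + 1, 3 * j + 3, 3 * i + 2, 3 * n + 3 * i + 1, 3 * n + 3 * i + 2, 3 * n + 3 * j + 3}

variable {n i j k l x : ℕ}

theorem edgeSwaps_apply_of_notMem (hx : x ∉ edgeDarts n i j) : edgeSwaps n i j x = x := by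
  simp only [edgeDarts, Set.mem_insert_iff, Set.mem_singleton_iff, not_or] at hx
  simp only [edgeSwaps, mul_apply, swap_apply_def]
  split_ifs <;> omega

theorem mapsTo_edgeSwaps : Set.MapsTo (edgeSwaps n i j) (edgeDarts n i j) (edgeDarts n i j) := by
  intro x hx
  simp only [edgeDarts, Set.mem_insert_iff, Set.mem_singleton_iff] at hx ⊢
  simp only [edgeSwaps, mul_apply, swap_apply_def]
  split_ifs <;> omega

theorem edgeSwaps_apply_ne (hn : n ≠ 0) (hx : x ∈ edgeDarts n i j) :
    edgeSwaps n i j x ≠ x := by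
  simp only [edgeDarts, Set.mem_insert_iff, Set.mem_singleton_iff] at hx
  simp only [edgeSwaps, mul_apply, swap_apply_def]
  split_ifs <;> omega

theorem edgeSwaps_sq (hn : n ≠ 0) : edgeSwaps n i j ^ 2 = 1 :=
  swap_mul_swap_mul_swap_sq (by simp; omega)

theorem edgeSwaps_pred_zero (hn : n ≠ 0) :
    edgeSwaps n (n - 1) 0 = swap (3 * n - 2) 3 * swap (3 * n - 1) (6 * n - 2) *
      swap (6 * n - 1) (3 * n + 3) := by
  rw [edgeSwaps, show 3 * (n - 1) + 1 = 3 * n - 2 by omega,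
    show 3 * (n - 1) + 2 = 3 * n - 1 by omega, show 3 * n + 3 * (n - 1) + 1 = 6 * n - 2 by omega,
    show 3 * n + 3 * (n - 1) + 2 = 6 * n - 1 by omega]

theorem edgeSwaps_apply_of_mem_edgeDarts (hi : i < n) (hk : k < n) (hj : j < n) (hl : l < n)
    (hik : i ≠ k) (hjl : j ≠ l) (hx : x ∈ edgeDarts n i j) : edgeSwaps n k l x = x :=
  edgeSwaps_apply_of_notMem fun hx' => by
    simp only [edgeDarts, Set.mem_insert_iff, Set.mem_singleton_iff] at hx hx'
    omega

def edgeInvolution (n : ℕ) : Perm ℕ :=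
  edgeSwaps n (n - 1) 0 * ((List.range (n - 1)).map fun i => edgeSwaps n i (i + 1)).prod

theorem edgeInvolution_apply (hij : i + 1 = j ∧ j < n ∨ i + 1 = n ∧ j = 0)
    (hx : x ∈ edgeDarts n i j) : edgeInvolution n x = edgeSwaps n i j x := by
  have hfix : ∀ k < n - 1, k ≠ i → ∀ y ∈ edgeDarts n i j, edgeSwaps n k (k + 1) y = y :=
    fun k _ hki _ hy => edgeSwaps_apply_of_mem_edgeDarts (by omega) (by omega) (by omega)
      (by omega) hki.symm (by omega) hy
  rw [edgeInvolution, mul_apply]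
  rcases hij with ⟨rfl, hj⟩ | ⟨rfl, rfl⟩
  · rw [prod_map_range_apply _ (by omega) (fun k hk hki => hfix k hk hki x hx)
      (fun k hk hki => hfix k hk hki _ (mapsTo_edgeSwaps hx))]
    exact edgeSwaps_apply_of_mem_edgeDarts (by omega) (by omega) (by omega) (by omega) (by omega)
      (by omega) (mapsTo_edgeSwaps hx)
  · rw [prod_map_range_apply_eq_self _ fun k hk => hfix k hk (by omega) x hx,
      Nat.add_sub_cancel]

theorem exists_mem_edgeDarts (hx : x ∈ Finset.Icc 1 (6 * n)) :
    ∃ i j, (i + 1 = j ∧ j < n ∨ i + 1 = n ∧ j = 0) ∧ x ∈ edgeDarts n i j := by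
  rw [Finset.mem_Icc] at hx
  simp only [edgeDarts, Set.mem_insert_iff, Set.mem_singleton_iff]
  obtain ⟨t, ht, hxt⟩ : ∃ t < n,
      x - 1 = 3 * t + (x - 1) % 3 ∨ x - 1 = 3 * n + 3 * t + (x - 1) % 3 := by
    rcases Nat.lt_or_ge ((x - 1) / 3) n with h | h
    · exact ⟨(x - 1) / 3, h, by omega⟩
    · exact ⟨(x - 1) / 3 - n, by omega, by omega⟩
  -- darts `≡ 0 mod 3` at vertex `t` lie in the block of the vertex preceding `t`
  by_cases hr : (x - 1) % 3 = 2
  · rcases Nat.eq_zero_or_pos t with rfl | ht0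
    · exact ⟨n - 1, 0, by omega, by omega⟩
    · exact ⟨t - 1, t, by omega, by omega⟩
  · by_cases hsucc : t + 1 < n
    · exact ⟨t, t + 1, by omega, by omega⟩
    · exact ⟨t, 0, by omega, by omega⟩

theorem edgeInvolution_apply_of_notMem_Icc (hn : n ≠ 0) (hx : x ∉ Finset.Icc 1 (6 * n)) :
    edgeInvolution n x = x := by
  rw [Finset.mem_Icc] at hx
  have hfix : ∀ i j, i < n → j < n → edgeSwaps n i j x = x := fun i j _ _ =>
    edgeSwaps_apply_of_notMem fun h => by
      simp only [edgeDarts, Set.mem_insert_iff, Set.mem_singleton_iff] at h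
      omega
  rw [edgeInvolution, mul_apply,
    prod_map_range_apply_eq_self _ fun k hk => hfix k (k + 1) (by omega) (by omega),
    hfix _ _ (by omega) (by omega)]

theorem edgeInvolution_sq (hn : n ≠ 0) : edgeInvolution n ^ 2 = 1 := by
  ext x
  rw [one_apply]
  by_cases hx : x ∈ Finset.Icc 1 (6 * n)
  · obtain ⟨i, j, hij, hx⟩ := exists_mem_edgeDarts hx
    rw [pow_apply_eq_pow_apply_of_eqOn mapsTo_edgeSwaps (fun y hy => edgeInvolution_apply hij hy)
      2 hx, edgeSwaps_sq hn, one_apply]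
  · exact pow_apply_eq_self_of_apply_eq_self (edgeInvolution_apply_of_notMem_Icc hn hx) 2

theorem edgeInvolution_apply_ne (hn : n ≠ 0) (hx : x ∈ Finset.Icc 1 (6 * n)) :
    edgeInvolution n x ≠ x := by
  obtain ⟨i, j, hij, hx⟩ := exists_mem_edgeDarts hx
  rw [edgeInvolution_apply hij hx]
  exact edgeSwaps_apply_ne hn hx

def vertexDarts (i : ℕ) : List ℕ := [3 * i + 1, 3 * i + 2, 3 * i + 3]

def vertexCycle (i : ℕ) : Perm ℕ := (vertexDarts i).formPerm

def vertexRotation (n : ℕ) : Perm ℕ := ((List.range (2 * n)).map vertexCycle).prod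

theorem mem_vertexDarts :
    x ∈ vertexDarts i ↔ x = 3 * i + 1 ∨ x = 3 * i + 2 ∨ x = 3 * i + 3 := by
  simp [vertexDarts]

theorem vertexCycle_apply_of_mem_vertexDarts (hik : i ≠ k) (hx : x ∈ vertexDarts i) :
    vertexCycle k x = x :=
  List.formPerm_apply_of_notMem fun h => by
    rw [mem_vertexDarts] at hx h
    omega

theorem mapsTo_vertexCycle :
    Set.MapsTo (vertexCycle i) {x | x ∈ vertexDarts i} {x | x ∈ vertexDarts i} :=
  fun _ => List.formPerm_apply_mem_of_mem

theorem nodup_vertexDarts : (vertexDarts i).Nodup := by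
  simp [vertexDarts]

theorem vertexCycle_pow_three : vertexCycle i ^ 3 = 1 :=
  List.formPerm_pow_length_eq_one_of_nodup _ nodup_vertexDarts

theorem vertexCycle_apply_one : vertexCycle i (3 * i + 1) = 3 * i + 2 :=
  List.formPerm_apply_getElem _ nodup_vertexDarts 0 (by simp [vertexDarts])

theorem vertexCycle_apply_two : vertexCycle i (3 * i + 2) = 3 * i + 3 :=
  List.formPerm_apply_getElem _ nodup_vertexDarts 1 (by simp [vertexDarts])

theorem vertexRotation_apply (hi : i < 2 * n) (hx : x ∈ vertexDarts i) :
    vertexRotation n x = vertexCycle i x :=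
  prod_map_range_apply _ hi (fun _ _ hki => vertexCycle_apply_of_mem_vertexDarts (Ne.symm hki) hx)
    (fun _ _ hki => vertexCycle_apply_of_mem_vertexDarts (Ne.symm hki) (mapsTo_vertexCycle hx))

theorem vertexRotation_pow_three : vertexRotation n ^ 3 = 1 := by
  ext x
  rw [one_apply]
  by_cases hx : 1 ≤ x ∧ x ≤ 6 * n
  · have hx' : x ∈ vertexDarts ((x - 1) / 3) := by
      rw [mem_vertexDarts]
      omega
    rw [pow_apply_eq_pow_apply_of_eqOn mapsTo_vertexCycle
      (fun _ hy => vertexRotation_apply (by omega) hy) 3 hx', vertexCycle_pow_three, one_apply]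
  · have hfix (k : ℕ) (hk : k < 2 * n) : vertexCycle k x = x :=
      List.formPerm_apply_of_notMem (by rw [mem_vertexDarts]; omega)
    exact pow_apply_eq_self_of_apply_eq_self (prod_map_range_apply_eq_self _ hfix) 3

def monodromyGroup (n : ℕ) : Subgroup (Perm ℕ) :=
  Subgroup.closure {edgeInvolution n, vertexRotation n}

theorem orbit_edgeInvolution_apply (x : ℕ) :
    orbit (monodromyGroup n) (edgeInvolution n x) = orbit (monodromyGroup n) x :=
  orbit_apply_eq (Subgroup.subset_closure (by simp)) x

theorem orbit_vertexRotation_apply (x : ℕ) :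
    orbit (monodromyGroup n) (vertexRotation n x) = orbit (monodromyGroup n) x :=
  orbit_apply_eq (Subgroup.subset_closure (by simp)) x

theorem orbit_of_mem_vertexDarts (hi : i < 2 * n) (hx : x ∈ vertexDarts i) :
    orbit (monodromyGroup n) x = orbit (monodromyGroup n) (3 * i + 1) := by
  have h₁ : vertexRotation n (3 * i + 1) = 3 * i + 2 := by
    rw [vertexRotation_apply hi (by simp [vertexDarts]), vertexCycle_apply_one]
  have h₂ : vertexRotation n (3 * i + 2) = 3 * i + 3 := by
    rw [vertexRotation_apply hi (by simp [vertexDarts]), vertexCycle_apply_two]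
  rcases mem_vertexDarts.1 hx with rfl | rfl | rfl
  · rfl
  · rw [← h₁, orbit_vertexRotation_apply]
  · rw [← h₂, ← h₁, orbit_vertexRotation_apply, orbit_vertexRotation_apply]

theorem orbit_succ (hi : i + 1 < n) :
    orbit (monodromyGroup n) (3 * (i + 1) + 1) = orbit (monodromyGroup n) (3 * i + 1) := by
  have h : edgeInvolution n (3 * i + 1) = 3 * (i + 1) + 3 := by
    rw [edgeInvolution_apply (Or.inl ⟨rfl, hi⟩) (by simp [edgeDarts])]
    simp only [edgeSwaps, mul_apply, swap_apply_def]
    split_ifs <;> omega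
  rw [← orbit_of_mem_vertexDarts (x := 3 * (i + 1) + 3) (by omega) (by simp [vertexDarts]), ← h,
    orbit_edgeInvolution_apply]

theorem orbit_vertical (hi : i < n) :
    orbit (monodromyGroup n) (3 * (n + i) + 1) = orbit (monodromyGroup n) (3 * i + 1) := by
  obtain ⟨j, hij⟩ : ∃ j, i + 1 = j ∧ j < n ∨ i + 1 = n ∧ j = 0 := by
    rcases Nat.lt_or_ge (i + 1) n with h | h
    · exact ⟨i + 1, by omega⟩
    · exact ⟨0, by omega⟩
  have h : edgeInvolution n (3 * i + 2) = 3 * (n + i) + 1 := by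
    rw [edgeInvolution_apply hij (by simp [edgeDarts])]
    simp only [edgeSwaps, mul_apply, swap_apply_def]
    split_ifs <;> omega
  rw [← h, orbit_edgeInvolution_apply,
    orbit_of_mem_vertexDarts (i := i) (by omega) (by simp [vertexDarts])]

theorem orbit_eq_orbit_one (hx : x ∈ Finset.Icc 1 (6 * n)) :
    orbit (monodromyGroup n) x = orbit (monodromyGroup n) 1 := by
  have htop : ∀ i < n, orbit (monodromyGroup n) (3 * i + 1) = orbit (monodromyGroup n) 1 := by
    intro i
    induction i with
    | zero => exact fun _ => rfl
    | succ i ih => exact fun hi => (orbit_succ hi).trans (ih (by omega))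
  rw [Finset.mem_Icc] at hx
  rw [orbit_of_mem_vertexDarts (i := (x - 1) / 3) (by omega) (by rw [mem_vertexDarts]; omega)]
  rcases Nat.lt_or_ge ((x - 1) / 3) n with h | h
  · exact htop _ h
  · rw [← Nat.add_sub_cancel' h, orbit_vertical (by omega), htop _ (by omega)]

end NPrism

/-- For every integer `n ≥ 3`, the permutations
`σ₀ = (3n−2,3)(3n−1,6n−2)(6n−1,3n+3) · ∏_{i=0}^{n−2} (3i+1,3i+6)(3i+2,3n+3i+1)(3n+3i+2,3n+3i+6)`
and `σ₁ = ∏_{i=0}^{2n−1} (3i+1,3i+2,3i+3)` of the `n`-prism satisfy: `σ₀` is a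
fixed-point-free involution on `{1,…,6n}`, `σ₁³ = 1`, and the subgroup generated by `σ₀`
and `σ₁` acts transitively on `{1,…,6n}`. -/
theorem n_prism_permutation_representation (n : ℕ) (hn : 3 ≤ n) (σ₀ σ₁ : Equiv.Perm ℕ)
    (hσ₀ : σ₀ = Equiv.swap (3 * n - 2) 3 * Equiv.swap (3 * n - 1) (6 * n - 2) *
      Equiv.swap (6 * n - 1) (3 * n + 3) *
      ((List.range (n - 1)).map (fun i =>
        Equiv.swap (3 * i + 1) (3 * i + 6) * Equiv.swap (3 * i + 2) (3 * n + 3 * i + 1) *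
        Equiv.swap (3 * n + 3 * i + 2) (3 * n + 3 * i + 6))).prod)
    (hσ₁ : σ₁ = ((List.range (2 * n)).map (fun i =>
      ([3 * i + 1, 3 * i + 2, 3 * i + 3] : List ℕ).formPerm)).prod) :
    σ₀ * σ₀ = 1 ∧ (∀ x ∈ Finset.Icc 1 (6 * n), σ₀ x ≠ x) ∧ σ₁ ^ 3 = 1 ∧
    ∀ a ∈ Finset.Icc 1 (6 * n), ∀ b ∈ Finset.Icc 1 (6 * n),
      ∃ g ∈ Subgroup.closure ({σ₀, σ₁} : Set (Equiv.Perm ℕ)), g a = b := by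
  have hn₀ : n ≠ 0 := by omega
  obtain rfl : σ₀ = NPrism.edgeInvolution n := by
    rw [hσ₀, NPrism.edgeInvolution, NPrism.edgeSwaps_pred_zero hn₀]
    -- `3 * (i + 1) + 3` and `3 * i + 6` agree definitionally
    rfl
  obtain rfl : σ₁ = NPrism.vertexRotation n := hσ₁
  refine ⟨by rw [← sq, NPrism.edgeInvolution_sq hn₀],
    fun x hx ↦ NPrism.edgeInvolution_apply_ne hn₀ hx, NPrism.vertexRotation_pow_three,
    fun a ha b hb ↦ ?_⟩
  exact exists_mem_apply_eq_of_orbit_eq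
    ((NPrism.orbit_eq_orbit_one ha).trans (NPrism.orbit_eq_orbit_one hb).symm)
end

section
/- For every integer n ≥ 3, define permutations of {1,…,8n} by σ₀ = (4n−3, 4)(4n−2, 8n−2)(3, 8n−1)(4n+1, 8n) · ∏_{i=0}^{n−2} (4i+1, 4i+8)(4i+2, 4n+4i+2)(4i+7, 4n+4i+3)(4n+4i+4, 4n+4i+5), and σ₁ = the product of the 2n 4-cycles (4i+1, 4i+2, 4i+3, 4i+4) for i = 0,…,2n−1. Then σ₀ is a fixed-point-free involution on {1,…,8n}, σ₁⁴ = 1, and the subgroup generated by σ₀ and σ₁ acts transitively on {1,…,8n}. -/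
/-!
Number the darts so that `4 * k + 1 + q` (`q < 4`) is corner `q` of vertex `k`; the vertices
`0, …, n - 1` form the top `n`-gon and `n, …, 2n - 1` the bottom one, and `σ₁` rotates the corners
of each vertex. The `4n` transpositions of `σ₀` have pairwise disjoint supports covering
`{1, …, 8n}`, so `σ₀` is evaluated one transposition at a time (all other factors fix both of its
endpoints), and it is a fixed-point-free involution there. For transitivity, the top-ring edges
`4k + 1 ↦ 4(k + 1) + 4` reach every top vertex from vertex `0`, the spokes
`4k + 2 ↦ 4(n + k) + 2` reach every bottom vertex from a top one, and `σ₁` moves between the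
corners of a vertex.
-/

open Equiv

namespace List

variable {α : Type*}

theorem prod_map_range_apply_eq_self (F : ℕ → Equiv.Perm α) {m : ℕ} {x : α}
    (h : ∀ i < m, F i x = x) : ((range m).map F).prod x = x := by
  induction m with
  | zero => rfl
  | succ m ih =>
    rw [range_succ, map_append, prod_append, map_singleton, prod_singleton, Perm.mul_apply,
      h m m.lt_succ_self]
    exact ih fun i hi => h i (by omega)

theorem prod_map_range_apply_of_forall_ne (F : ℕ → Equiv.Perm α) {m j : ℕ} {a b : α} (hj : j < m)
    (hab : F j a = b) (ha : ∀ i < m, i ≠ j → F i a = a) (hb : ∀ i < m, i ≠ j → F i b = b) :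
    ((range m).map F).prod a = b := by
  induction m with
  | zero => omega
  | succ m ih =>
    rw [range_succ, map_append, prod_append, map_singleton, prod_singleton, Perm.mul_apply]
    rcases eq_or_ne m j with rfl | hmj
    · rw [hab]
      exact prod_map_range_apply_eq_self F fun i hi => hb i (by omega) (by omega)
    · rw [ha m m.lt_succ_self hmj]
      exact ih (by omega) (fun i hi => ha i (by omega)) (fun i hi => hb i (by omega))

end List

namespace Subgroup

variable {α : Type*} {H : Subgroup (Perm α)} {a b c : α}

theorem apply_mem_orbit {σ : Perm α} (hσ : σ ∈ H) (ha : a ∈ MulAction.orbit H c) :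
    σ a ∈ MulAction.orbit H c :=
  MulAction.mem_orbit_of_mem_orbit (⟨σ, hσ⟩ : H) ha

theorem exists_mem_apply_eq_of_mem_orbit (ha : a ∈ MulAction.orbit H c)
    (hb : b ∈ MulAction.orbit H c) : ∃ g ∈ H, g a = b := by
  obtain ⟨g, rfl⟩ := ha
  obtain ⟨h, rfl⟩ := hb
  refine ⟨h * g⁻¹, (h * g⁻¹).2, ?_⟩
  simp [Subgroup.smul_def, Perm.smul_def]

end Subgroup

namespace Antiprism

variable (n : ℕ)

def edgeBlock (i : ℕ) : Perm ℕ :=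
  swap (4 * i + 1) (4 * i + 8) * swap (4 * i + 2) (4 * n + 4 * i + 2) *
    swap (4 * i + 7) (4 * n + 4 * i + 3) * swap (4 * n + 4 * i + 4) (4 * n + 4 * i + 5)

def wrapEdges : Perm ℕ :=
  swap (4 * n - 3) 4 * swap (4 * n - 2) (8 * n - 2) * swap 3 (8 * n - 1) * swap (4 * n + 1) (8 * n)

def edgePerm : Perm ℕ :=
  wrapEdges n * ((List.range (n - 1)).map (edgeBlock n)).prod

def vertexCycle (i : ℕ) : Perm ℕ :=
  List.formPerm [4 * i + 1, 4 * i + 2, 4 * i + 3, 4 * i + 4]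

def vertexPerm : Perm ℕ :=
  ((List.range (2 * n)).map vertexCycle).prod

def monodromyGroup : Subgroup (Perm ℕ) :=
  Subgroup.closure {edgePerm n, vertexPerm n}

inductive IsBlockEdge (i : ℕ) : ℕ → ℕ → Prop
  | top : IsBlockEdge i (4 * i + 1) (4 * i + 8)
  | spoke : IsBlockEdge i (4 * i + 2) (4 * n + 4 * i + 2)
  | diagonal : IsBlockEdge i (4 * i + 7) (4 * n + 4 * i + 3)
  | bottom : IsBlockEdge i (4 * n + 4 * i + 4) (4 * n + 4 * i + 5)

-- The block `i = n - 1`, with the vertices `n` and `2n` it would reach renamed `0` and `n`.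
inductive IsWrapEdge : ℕ → ℕ → Prop
  | top : IsWrapEdge (4 * n - 3) 4
  | spoke : IsWrapEdge (4 * n - 2) (8 * n - 2)
  | diagonal : IsWrapEdge 3 (8 * n - 1)
  | bottom : IsWrapEdge (4 * n + 1) (8 * n)

variable {n}

theorem edgeBlock_apply_of_isBlockEdge (hn : 1 < n) {i a b : ℕ} (h : IsBlockEdge n i a b) :
    edgeBlock n i a = b ∧ edgeBlock n i b = a := by
  cases h <;> simp (disch := omega) only [edgeBlock, Perm.mul_apply, swap_apply_of_ne_of_ne,
    swap_apply_left, swap_apply_right, and_self]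

theorem edgeBlock_apply_eq_self {i z : ℕ}
    (h : z ≠ 4 * i + 1 ∧ z ≠ 4 * i + 8 ∧ z ≠ 4 * i + 2 ∧ z ≠ 4 * n + 4 * i + 2 ∧
      z ≠ 4 * i + 7 ∧ z ≠ 4 * n + 4 * i + 3 ∧ z ≠ 4 * n + 4 * i + 4 ∧ z ≠ 4 * n + 4 * i + 5) :
    edgeBlock n i z = z := by
  simp only [edgeBlock, Perm.mul_apply, swap_apply_def]
  split_ifs <;> omega

theorem wrapEdges_apply_of_isWrapEdge (hn : 0 < n) {a b : ℕ} (h : IsWrapEdge n a b) :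
    wrapEdges n a = b ∧ wrapEdges n b = a := by
  cases h <;> simp (disch := omega) only [wrapEdges, Perm.mul_apply, swap_apply_of_ne_of_ne,
    swap_apply_left, swap_apply_right, and_self]

theorem wrapEdges_apply_eq_self {z : ℕ}
    (h : z ≠ 4 * n - 3 ∧ z ≠ 4 ∧ z ≠ 4 * n - 2 ∧ z ≠ 8 * n - 2 ∧ z ≠ 3 ∧ z ≠ 8 * n - 1 ∧
      z ≠ 4 * n + 1 ∧ z ≠ 8 * n) :
    wrapEdges n z = z := by
  simp only [wrapEdges, Perm.mul_apply, swap_apply_def]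
  split_ifs <;> omega

theorem edgePerm_apply_of_isBlockEdge {i a b : ℕ} (hi : i < n - 1) (h : IsBlockEdge n i a b) :
    edgePerm n a = b ∧ edgePerm n b = a := by
  obtain ⟨hab, hba⟩ := edgeBlock_apply_of_isBlockEdge (by omega) h
  have hblock : ∀ j < n - 1, j ≠ i → edgeBlock n j a = a ∧ edgeBlock n j b = b := by
    intro j hj hji
    cases h <;> exact ⟨edgeBlock_apply_eq_self (by omega), edgeBlock_apply_eq_self (by omega)⟩
  have hwrap : wrapEdges n a = a ∧ wrapEdges n b = b := by
    cases h <;> exact ⟨wrapEdges_apply_eq_self (by omega), wrapEdges_apply_eq_self (by omega)⟩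
  simp only [edgePerm, Perm.mul_apply]
  rw [List.prod_map_range_apply_of_forall_ne _ hi hab (fun j hj hji => (hblock j hj hji).1)
      (fun j hj hji => (hblock j hj hji).2),
    List.prod_map_range_apply_of_forall_ne _ hi hba (fun j hj hji => (hblock j hj hji).2)
      (fun j hj hji => (hblock j hj hji).1), hwrap.1, hwrap.2]
  exact ⟨rfl, rfl⟩

theorem edgePerm_apply_of_isWrapEdge (hn : 0 < n) {a b : ℕ} (h : IsWrapEdge n a b) :
    edgePerm n a = b ∧ edgePerm n b = a := by
  have hblock : ∀ j < n - 1, edgeBlock n j a = a ∧ edgeBlock n j b = b := by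
    intro j hj
    cases h <;> exact ⟨edgeBlock_apply_eq_self (by omega), edgeBlock_apply_eq_self (by omega)⟩
  simp only [edgePerm, Perm.mul_apply]
  rw [List.prod_map_range_apply_eq_self _ fun j hj => (hblock j hj).1,
    List.prod_map_range_apply_eq_self _ fun j hj => (hblock j hj).2]
  exact wrapEdges_apply_of_isWrapEdge hn h

theorem edgePerm_apply_eq_self (hn : 0 < n) {x : ℕ} (hx : x = 0 ∨ 8 * n < x) :
    edgePerm n x = x := by
  simp only [edgePerm, Perm.mul_apply]
  rw [List.prod_map_range_apply_eq_self (edgeBlock n) fun j hj =>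
      edgeBlock_apply_eq_self (by omega),
    wrapEdges_apply_eq_self (by omega)]

theorem exists_edgePerm_swap (hn : 0 < n) {x : ℕ} (h1 : 1 ≤ x) (h8 : x ≤ 8 * n) :
    ∃ y ≠ x, edgePerm n x = y ∧ edgePerm n y = x := by
  have of_pair {a b : ℕ} (hab : a ≠ b) (h : edgePerm n a = b ∧ edgePerm n b = a)
      (hx : x = a ∨ x = b) : ∃ y ≠ x, edgePerm n x = y ∧ edgePerm n y = x := by
    rcases hx with rfl | rfl
    exacts [⟨b, hab.symm, h⟩, ⟨a, hab, h.symm⟩]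
  have wrap {a b : ℕ} (h : IsWrapEdge n a b) :=
    of_pair (by cases h <;> omega) (edgePerm_apply_of_isWrapEdge hn h)
  have block {i a b : ℕ} (hi : i < n - 1) (h : IsBlockEdge n i a b) :=
    of_pair (by cases h <;> omega) (edgePerm_apply_of_isBlockEdge hi h)
  obtain ⟨k, q, hq, rfl⟩ : ∃ k q, q < 4 ∧ x = 4 * k + 1 + q :=
    ⟨(x - 1) / 4, (x - 1) % 4, by omega, by omega⟩
  interval_cases q
  · rcases (by omega : k + 1 < n ∨ k + 1 = n ∨ k = n ∨ n < k) with hk | hk | hk | hk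
    · exact block (i := k) (by omega) .top (by omega)
    · exact wrap .top (by omega)
    · exact wrap .bottom (by omega)
    · exact block (i := k - n - 1) (by omega) .bottom (by omega)
  · rcases (by omega : k + 1 < n ∨ k + 1 = n ∨ n ≤ k ∧ k + 1 < 2 * n ∨ k + 1 = 2 * n)
      with hk | hk | hk | hk
    · exact block (i := k) (by omega) .spoke (by omega)
    · exact wrap .spoke (by omega)
    · exact block (i := k - n) (by omega) .spoke (by omega)
    · exact wrap .spoke (by omega)
  · rcases (by omega : k = 0 ∨ 0 < k ∧ k < n ∨ n ≤ k ∧ k + 1 < 2 * n ∨ k + 1 = 2 * n)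
      with hk | hk | hk | hk
    · exact wrap .diagonal (by omega)
    · exact block (i := k - 1) (by omega) .diagonal (by omega)
    · exact block (i := k - n) (by omega) .diagonal (by omega)
    · exact wrap .diagonal (by omega)
  · rcases (by omega : k = 0 ∨ 0 < k ∧ k < n ∨ n ≤ k ∧ k + 1 < 2 * n ∨ k + 1 = 2 * n)
      with hk | hk | hk | hk
    · exact wrap .top (by omega)
    · exact block (i := k - 1) (by omega) .top (by omega)
    · exact block (i := k - n) (by omega) .bottom (by omega)
    · exact wrap .bottom (by omega)

theorem edgePerm_mul_self (hn : 0 < n) : edgePerm n * edgePerm n = 1 := by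
  ext x
  rw [Perm.mul_apply, Perm.one_apply]
  by_cases hx : 1 ≤ x ∧ x ≤ 8 * n
  · obtain ⟨y, -, hxy, hyx⟩ := exists_edgePerm_swap hn hx.1 hx.2
    rw [hxy, hyx]
  · rw [edgePerm_apply_eq_self hn (x := x) (by omega), edgePerm_apply_eq_self hn (by omega)]

theorem edgePerm_apply_ne (hn : 0 < n) {x : ℕ} (h1 : 1 ≤ x) (h8 : x ≤ 8 * n) :
    edgePerm n x ≠ x := by
  obtain ⟨y, hyx, hxy, -⟩ := exists_edgePerm_swap hn h1 h8
  rwa [hxy]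

theorem edgePerm_apply_top {k : ℕ} (hk : k + 1 < n) : edgePerm n (4 * k + 1) = 4 * k + 8 :=
  (edgePerm_apply_of_isBlockEdge (by omega) .top).1

theorem edgePerm_apply_spoke {k : ℕ} (hk : k < n) :
    edgePerm n (4 * k + 2) = 4 * n + 4 * k + 2 := by
  rcases (by omega : k + 1 < n ∨ k + 1 = n) with hk | rfl
  · exact (edgePerm_apply_of_isBlockEdge (by omega) .spoke).1
  · have := (edgePerm_apply_of_isWrapEdge (n := k + 1) (by omega) .spoke).1
    rwa [show 4 * (k + 1) - 2 = 4 * k + 2 by omega,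
      show 8 * (k + 1) - 2 = 4 * (k + 1) + 4 * k + 2 by omega] at this

theorem vertexCycle_apply_corner {i q : ℕ} (hq : q < 4) :
    vertexCycle i (4 * i + 1 + q) = 4 * i + 1 + (q + 1) % 4 := by
  simp only [vertexCycle, List.formPerm_cons_cons, List.formPerm_singleton, mul_one,
    Perm.mul_apply, swap_apply_def]
  split_ifs <;> omega

theorem vertexCycle_apply_eq_self {i z : ℕ} (h : z < 4 * i + 1 ∨ 4 * i + 4 < z) :
    vertexCycle i z = z := by
  simp only [vertexCycle, List.formPerm_cons_cons, List.formPerm_singleton, mul_one,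
    Perm.mul_apply, swap_apply_def]
  split_ifs <;> omega

theorem vertexPerm_apply_corner {k q : ℕ} (hk : k < 2 * n) (hq : q < 4) :
    vertexPerm n (4 * k + 1 + q) = 4 * k + 1 + (q + 1) % 4 :=
  List.prod_map_range_apply_of_forall_ne _ hk (vertexCycle_apply_corner hq)
    (fun _ _ _ => vertexCycle_apply_eq_self (by omega))
    (fun _ _ _ => vertexCycle_apply_eq_self (by omega))

theorem vertexPerm_apply_eq_self {x : ℕ} (hx : x = 0 ∨ 8 * n < x) : vertexPerm n x = x :=
  List.prod_map_range_apply_eq_self _ fun _ _ => vertexCycle_apply_eq_self (by omega)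

theorem vertexPerm_pow_apply_corner {k q : ℕ} (hk : k < 2 * n) (hq : q < 4) (t : ℕ) :
    (vertexPerm n ^ t) (4 * k + 1 + q) = 4 * k + 1 + (q + t) % 4 := by
  induction t with
  | zero => rw [pow_zero, Perm.one_apply]; omega
  | succ t ih =>
    rw [pow_succ', Perm.mul_apply, ih, vertexPerm_apply_corner hk (Nat.mod_lt _ (by norm_num))]
    omega

theorem vertexPerm_pow_four : vertexPerm n ^ 4 = 1 := by
  ext x
  rw [Perm.one_apply]
  by_cases hx : 1 ≤ x ∧ x ≤ 8 * n
  · obtain ⟨k, q, hk, hq, rfl⟩ : ∃ k q, k < 2 * n ∧ q < 4 ∧ x = 4 * k + 1 + q :=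
      ⟨(x - 1) / 4, (x - 1) % 4, by omega, by omega, by omega⟩
    rw [vertexPerm_pow_apply_corner hk hq]
    omega
  · exact Perm.pow_apply_eq_self_of_apply_eq_self (vertexPerm_apply_eq_self (by omega)) 4

theorem edgePerm_mem_monodromyGroup : edgePerm n ∈ monodromyGroup n :=
  Subgroup.subset_closure (by simp)

theorem vertexPerm_mem_monodromyGroup : vertexPerm n ∈ monodromyGroup n :=
  Subgroup.subset_closure (by simp)

theorem corner_mem_orbit_of_corner_mem_orbit {k q r : ℕ} (hk : k < 2 * n) (hq : q < 4)
    (hr : r < 4) (h : 4 * k + 1 + q ∈ MulAction.orbit (monodromyGroup n) 1) :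
    4 * k + 1 + r ∈ MulAction.orbit (monodromyGroup n) 1 := by
  have := Subgroup.apply_mem_orbit (pow_mem vertexPerm_mem_monodromyGroup (r + 4 - q)) h
  rwa [vertexPerm_pow_apply_corner hk hq, show (q + (r + 4 - q)) % 4 = r by omega] at this

theorem top_vertex_mem_orbit {k : ℕ} (hk : k < n) :
    4 * k + 1 ∈ MulAction.orbit (monodromyGroup n) 1 := by
  induction k with
  | zero => exact MulAction.mem_orbit_self 1
  | succ k ih =>
    have := Subgroup.apply_mem_orbit edgePerm_mem_monodromyGroup (ih (by omega))
    rw [edgePerm_apply_top hk, show 4 * k + 8 = 4 * (k + 1) + 1 + 3 by omega] at this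
    exact corner_mem_orbit_of_corner_mem_orbit (q := 3) (r := 0) (by omega) (by omega)
      (by omega) this

theorem mem_orbit_one {x : ℕ} (h1 : 1 ≤ x) (h8 : x ≤ 8 * n) :
    x ∈ MulAction.orbit (monodromyGroup n) 1 := by
  obtain ⟨k, q, hk, hq, rfl⟩ : ∃ k q, k < 2 * n ∧ q < 4 ∧ x = 4 * k + 1 + q :=
    ⟨(x - 1) / 4, (x - 1) % 4, by omega, by omega, by omega⟩
  refine corner_mem_orbit_of_corner_mem_orbit hk (q := 0) (by omega) hq ?_
  rcases lt_or_ge k n with hk' | hk'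
  · exact top_vertex_mem_orbit hk'
  · obtain ⟨m, rfl⟩ := Nat.exists_eq_add_of_le hk'
    have hm : m < n := by omega
    have hspoke := corner_mem_orbit_of_corner_mem_orbit (q := 0) (r := 1) (by omega) (by omega)
      (by omega) (top_vertex_mem_orbit hm)
    have := Subgroup.apply_mem_orbit edgePerm_mem_monodromyGroup hspoke
    rw [edgePerm_apply_spoke hm, show 4 * n + 4 * m + 2 = 4 * (n + m) + 1 + 1 by omega] at this
    exact corner_mem_orbit_of_corner_mem_orbit hk (by omega) (by omega) this

end Antiprism

/-- For every integer `n ≥ 3`, the permutations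
`σ₀ = (4n−3,4)(4n−2,8n−2)(3,8n−1)(4n+1,8n) ·
  ∏_{i=0}^{n−2} (4i+1,4i+8)(4i+2,4n+4i+2)(4i+7,4n+4i+3)(4n+4i+4,4n+4i+5)`
and `σ₁ = ∏_{i=0}^{2n−1} (4i+1,4i+2,4i+3,4i+4)` of the `n`-antiprism satisfy: `σ₀` is a
fixed-point-free involution on `{1,…,8n}`, `σ₁⁴ = 1`, and the subgroup generated by `σ₀`
and `σ₁` acts transitively on `{1,…,8n}`. -/
theorem n_antiprism_permutation_representation (n : ℕ) (hn : 3 ≤ n) (σ₀ σ₁ : Equiv.Perm ℕ)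
    (hσ₀ : σ₀ = Equiv.swap (4 * n - 3) 4 * Equiv.swap (4 * n - 2) (8 * n - 2) *
      Equiv.swap 3 (8 * n - 1) * Equiv.swap (4 * n + 1) (8 * n) *
      ((List.range (n - 1)).map (fun i =>
        Equiv.swap (4 * i + 1) (4 * i + 8) * Equiv.swap (4 * i + 2) (4 * n + 4 * i + 2) *
        Equiv.swap (4 * i + 7) (4 * n + 4 * i + 3) *
        Equiv.swap (4 * n + 4 * i + 4) (4 * n + 4 * i + 5))).prod)
    (hσ₁ : σ₁ = ((List.range (2 * n)).map (fun i =>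
      ([4 * i + 1, 4 * i + 2, 4 * i + 3, 4 * i + 4] : List ℕ).formPerm)).prod) :
    σ₀ * σ₀ = 1 ∧ (∀ x ∈ Finset.Icc 1 (8 * n), σ₀ x ≠ x) ∧ σ₁ ^ 4 = 1 ∧
    ∀ a ∈ Finset.Icc 1 (8 * n), ∀ b ∈ Finset.Icc 1 (8 * n),
      ∃ g ∈ Subgroup.closure ({σ₀, σ₁} : Set (Equiv.Perm ℕ)), g a = b := by
  obtain rfl : σ₀ = Antiprism.edgePerm n := hσ₀
  obtain rfl : σ₁ = Antiprism.vertexPerm n := hσ₁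
  have hn₀ : 0 < n := by omega
  refine ⟨Antiprism.edgePerm_mul_self hn₀, fun x hx => ?_, Antiprism.vertexPerm_pow_four,
    fun a ha b hb => ?_⟩
  · rw [Finset.mem_Icc] at hx
    exact Antiprism.edgePerm_apply_ne hn₀ hx.1 hx.2
  · rw [Finset.mem_Icc] at ha hb
    exact Subgroup.exists_mem_apply_eq_of_mem_orbit (Antiprism.mem_orbit_one ha.1 ha.2)
      (Antiprism.mem_orbit_one hb.1 hb.2)
end
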